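/- Fix 0 < ε < 1/2 and let φ be evaluation at the point ((2ε)^{2^0}, …, (2ε)^{2^{n−1}}) ∈ ℝⁿ. For any polynomial λ of degree at most d, |φ(λ · y_n²)| ≤ (2ε)^{2^{n−1}} · (n+1)^d · ‖λ‖, where ‖λ‖ is the maximum absolute value of a coefficient of λ. Consequently, in any identity ε − y₁ = Σᵢ hᵢ² + Σ_{i=1}^{n−1} σᵢ(yᵢ² − y_{i+1}) + λ·y_n² with all terms of degree at most d, the polynomial λ must satisfy ‖λ‖ ≥ ε·(2ε)^{−2^{n−1}}·(n+1)^{−d}. -/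

import Mathlib

open MvPolynomial Finset

/-!
Evaluating at `yᵢ = c ^ 2 ^ (i - 1)` with `c = 2ε` kills every constraint `yᵢ² - yᵢ₊₁`, so an
identity `ε - y₁ = Σ hᵢ² + Σ σᵢ (yᵢ² - yᵢ₊₁) + λ yₙ²` forces `λ(φ) yₙ(φ)² ≤ ε - 2ε = -ε`.
All coordinates lie in `(0, 1)`, so every monomial is at most `1` there and `|λ(φ)|` is at most
the number of monomials of `λ` times `‖λ‖`. Padding a monomial of degree `≤ d` with a slack
variable to degree exactly `d` injects the monomials into the multisets of size `d` on `n + 1`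
letters, which are images of words of length `d`; hence there are at most `(n + 1) ^ d`.
-/

theorem Sym.ofVector_surjective {α : Type*} {n : ℕ} :
    Function.Surjective (Sym.ofVector : List.Vector α n → Sym α n) :=
  fun s => ⟨⟨(s : Multiset α).toList, by simp⟩, Subtype.ext (Multiset.coe_toList _)⟩

theorem Sym.card_le_card_pow {α : Type*} [Fintype α] [DecidableEq α] (n : ℕ) :
    Fintype.card (Sym α n) ≤ Fintype.card α ^ n := by
  simpa using Fintype.card_le_of_surjective _ (Sym.ofVector_surjective (α := α) (n := n))

theorem Finsupp.card_le_pow_of_degree_le {σ : Type*} [Fintype σ] {d : ℕ}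
    (s : Finset (σ →₀ ℕ)) (hs : ∀ m ∈ s, m.degree ≤ d) :
    #s ≤ (Fintype.card σ + 1) ^ d := by
  classical
  let restrict : Sym (Option σ) d → σ →₀ ℕ := fun P => Finsupp.equivFunOnFinite.symm
    fun i => (Sym.equivNatSumOfFintype (Option σ) d P).1 (Option.some i)
  have hsub : s ⊆ univ.image restrict := by
    intro m hm
    have hsum : ∑ i : Option σ, (Option.elim · (d - m.degree) m) i = d := by
      rw [Fintype.sum_option]
      simp only [Option.elim_none, Option.elim_some, ← Finsupp.degree_eq_sum]
      have := hs m hm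
      omega
    refine mem_image.2 ⟨(Sym.equivNatSumOfFintype (Option σ) d).symm ⟨_, hsum⟩, mem_univ _, ?_⟩
    ext i
    simp only [restrict, Equiv.apply_symm_apply, Finsupp.equivFunOnFinite_symm_apply_apply,
      Option.elim_some]
  calc #s ≤ #(univ.image restrict) := card_le_card hsub
    _ ≤ Fintype.card (Sym (Option σ) d) := card_image_le
    _ ≤ (Fintype.card σ + 1) ^ d := by simpa using Sym.card_le_card_pow (α := Option σ) d

namespace MvPolynomial

variable {σ R : Type*} {d : ℕ}

theorem card_support_le_of_totalDegree_le [Fintype σ] [CommSemiring R] {p : MvPolynomial σ R}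
    (hp : p.totalDegree ≤ d) : #p.support ≤ (Fintype.card σ + 1) ^ d :=
  Finsupp.card_le_pow_of_degree_le _ fun _ hm => (le_totalDegree hm).trans hp

theorem totalDegree_le_totalDegree_mul [CommRing R] [IsDomain R] (p : MvPolynomial σ R)
    {q : MvPolynomial σ R} (hq : q ≠ 0) : p.totalDegree ≤ (p * q).totalDegree := by
  rcases eq_or_ne p 0 with rfl | hp
  · simp
  · exact totalDegree_le_of_dvd_of_isDomain (dvd_mul_right p q) (mul_ne_zero hp hq)

theorem abs_eval_le_of_abs_coeff_le [Fintype σ] {x : σ → ℝ} (hx : ∀ i, |x i| ≤ 1)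
    {p : MvPolynomial σ ℝ} (hp : p.totalDegree ≤ d) {N : ℝ} (hN : ∀ m, |coeff m p| ≤ N) :
    |eval x p| ≤ ((Fintype.card σ : ℝ) + 1) ^ d * N := by
  have hmonomial : ∀ m : σ →₀ ℕ, |∏ i, x i ^ m i| ≤ 1 := fun m => by
    rw [Finset.abs_prod]
    exact prod_le_one (fun _ _ => abs_nonneg _)
      fun i _ => (abs_pow (x i) (m i)).symm ▸ pow_le_one₀ (abs_nonneg _) (hx i)
  have hN0 : 0 ≤ N := (abs_nonneg _).trans (hN 0)
  rw [eval_eq']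
  calc |∑ m ∈ p.support, coeff m p * ∏ i, x i ^ m i|
      ≤ ∑ m ∈ p.support, |coeff m p * ∏ i, x i ^ m i| := abs_sum_le_sum_abs _ _
    _ ≤ #p.support • N := sum_le_card_nsmul _ _ _ fun m _ => by
        rw [abs_mul]
        simpa using mul_le_mul (hN m) (hmonomial m) (abs_nonneg _) hN0
    _ ≤ ((Fintype.card σ : ℝ) + 1) ^ d * N := by
        rw [nsmul_eq_mul]
        gcongr
        exact_mod_cast card_support_le_of_totalDegree_le hp

theorem abs_eval_mul_X_sq_le [Fintype σ] {x : σ → ℝ} (hx : ∀ i, |x i| ≤ 1)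
    {p : MvPolynomial σ ℝ} (hp : p.totalDegree ≤ d) {N : ℝ} (hN : ∀ m, |coeff m p| ≤ N) (j : σ) :
    |eval x (p * X j ^ 2)| ≤ x j ^ 2 * (((Fintype.card σ : ℝ) + 1) ^ d * N) := by
  rw [eval_mul, eval_pow, eval_X, abs_mul, abs_pow, sq_abs, mul_comm]
  exact mul_le_mul_of_nonneg_left (abs_eval_le_of_abs_coeff_le hx hp hN) (sq_nonneg _)

theorem eval_pow_two_pow_X_sq_sub_X {n : ℕ} [CommRing R] (c : R) (i j : Fin n)
    (hij : (j : ℕ) = i + 1) : eval (fun k : Fin n => c ^ 2 ^ (k : ℕ)) (X i ^ 2 - X j) = 0 := by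
  rw [eval_sub, eval_pow, eval_X, eval_X, hij, ← pow_mul, pow_succ, sub_self]

end MvPolynomial

theorem eval_le_sub_of_eq_sum_sq_add {n t : ℕ} (hn : 0 < n) {ε : ℝ} (c : ℝ)
    (h : Fin t → MvPolynomial (Fin n) ℝ) (σ : Fin n → MvPolynomial (Fin n) ℝ)
    (r : MvPolynomial (Fin n) ℝ)
    (hid : (C ε - X ⟨0, hn⟩ : MvPolynomial (Fin n) ℝ) = (∑ j, h j ^ 2)
      + (∑ i : Fin n,
          if hi : (i : ℕ) + 1 < n then σ i * (X i ^ 2 - X ⟨(i : ℕ) + 1, hi⟩) else 0) + r) :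
    eval (fun i : Fin n => c ^ 2 ^ (i : ℕ)) r ≤ ε - c := by
  set x : Fin n → ℝ := fun i => c ^ 2 ^ (i : ℕ)
  have hconstraints : ∀ i : Fin n, eval x
      (if hi : (i : ℕ) + 1 < n then σ i * (X i ^ 2 - X ⟨(i : ℕ) + 1, hi⟩) else 0) = 0 := by
    intro i
    split_ifs with hi
    · rw [eval_mul, eval_pow_two_pow_X_sq_sub_X c i _ rfl, mul_zero]
    · exact map_zero _
  have hsq : 0 ≤ ∑ j, eval x (h j) ^ 2 := sum_nonneg fun j _ => sq_nonneg _
  have heval := congrArg (eval x) hid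
  simp only [eval_add, eval_sub, eval_C, eval_X, eval_sum, eval_pow, hconstraints,
    sum_const_zero, add_zero] at heval
  have hx0 : x ⟨0, hn⟩ = c := pow_one c
  linarith

/-- Let φ be evaluation at the point ((2ε)^{2^0}, …, (2ε)^{2^{n−1}}) (variables
0-indexed, X i standing for y_{i+1}).  (1) For any λ of degree at most d with all
coefficients bounded by N in absolute value, |φ(λ·y_n²)| ≤ (2ε)^{2^{n−1}}·(n+1)^d·N.
(2) Consequently, in any degree-d SoS identity
ε − y₁ = Σ hᵢ² + Σ σᵢ(yᵢ² − y_{i+1}) + λ·y_n², the polynomial λ has some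
coefficient of absolute value at least ε·(2ε)^{−2^{n−1}}·(n+1)^{−d}. -/
theorem stmt_17 (n d : ℕ) (hn : 1 ≤ n) (ε : ℝ) (hε0 : 0 < ε) (hε : ε < 1 / 2) :
    (∀ lam : MvPolynomial (Fin n) ℝ, lam.totalDegree ≤ d →
      ∀ N : ℝ, (∀ m : Fin n →₀ ℕ, |coeff m lam| ≤ N) →
        |eval (fun i : Fin n => (2 * ε) ^ (2 ^ (i : ℕ))) (lam * X ⟨n - 1, by omega⟩ ^ 2)|
          ≤ (2 * ε) ^ (2 ^ (n - 1)) * ((n : ℝ) + 1) ^ d * N) ∧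
    (∀ (t : ℕ) (h : Fin t → MvPolynomial (Fin n) ℝ)
        (σ : Fin n → MvPolynomial (Fin n) ℝ) (lam : MvPolynomial (Fin n) ℝ),
      (C ε - X ⟨0, by omega⟩ : MvPolynomial (Fin n) ℝ) =
          (∑ j, h j ^ 2)
          + (∑ i : Fin n,
              if hi : (i : ℕ) + 1 < n then σ i * (X i ^ 2 - X ⟨(i : ℕ) + 1, hi⟩) else 0)
          + lam * X ⟨n - 1, by omega⟩ ^ 2 →
      (∀ j, (h j ^ 2).totalDegree ≤ d) →
      (∀ i : Fin n, ∀ hi : (i : ℕ) + 1 < n,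
        (σ i * (X i ^ 2 - X (⟨(i : ℕ) + 1, hi⟩ : Fin n))).totalDegree ≤ d) →
      (lam * X (⟨n - 1, by omega⟩ : Fin n) ^ 2).totalDegree ≤ d →
      ∃ m : Fin n →₀ ℕ,
        ε * ((2 * ε) ^ (2 ^ (n - 1)))⁻¹ * (((n : ℝ) + 1) ^ d)⁻¹ ≤ |coeff m lam|) := by
  set q := (2 * ε) ^ 2 ^ (n - 1)
  have hq0 : 0 < q := by positivity
  have hq1 : q < 1 := pow_lt_one₀ (by positivity) (by linarith) (by positivity)
  have hx : ∀ i : Fin n, |(2 * ε) ^ 2 ^ (i : ℕ)| ≤ 1 := fun i => by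
    rw [abs_of_pos (by positivity)]
    exact pow_le_one₀ (by positivity) (by linarith)
  have hbound : ∀ {lam : MvPolynomial (Fin n) ℝ}, lam.totalDegree ≤ d → ∀ {N : ℝ},
      (∀ m, |coeff m lam| ≤ N) → |eval (fun i : Fin n => (2 * ε) ^ 2 ^ (i : ℕ))
        (lam * X ⟨n - 1, by omega⟩ ^ 2)| ≤ q ^ 2 * (((n : ℝ) + 1) ^ d * N) :=
    fun hd _ hN => by
      simpa only [Fintype.card_fin] using abs_eval_mul_X_sq_le hx hd hN ⟨n - 1, by omega⟩
  refine ⟨fun lam hd N hN => ?_, fun t h σ lam hid _ _ hdeg => ?_⟩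
  · have hN0 : 0 ≤ N := (abs_nonneg _).trans (hN 0)
    calc _ ≤ q ^ 2 * (((n : ℝ) + 1) ^ d * N) := hbound hd hN
      _ ≤ q * (((n : ℝ) + 1) ^ d * N) := by gcongr; nlinarith
      _ = _ := by ring
  · by_contra! hsmall
    set B := ε * q⁻¹ * (((n : ℝ) + 1) ^ d)⁻¹
    have hlam : lam.totalDegree ≤ d :=
      (totalDegree_le_totalDegree_mul lam (pow_ne_zero 2 (X_ne_zero _))).trans hdeg
    have hneg := eval_le_sub_of_eq_sum_sq_add (by omega) (2 * ε) h σ _ hid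
    have hle := hbound hlam fun m => (hsmall m).le
    have hB : q * (((n : ℝ) + 1) ^ d * B) = ε := by
      simp only [B]
      field_simp
    have hB0 : 0 < ((n : ℝ) + 1) ^ d * B := by positivity
    have : q ^ 2 * (((n : ℝ) + 1) ^ d * B) < q * (((n : ℝ) + 1) ^ d * B) :=
      mul_lt_mul_of_pos_right (by nlinarith) hB0
    rw [abs_le] at hle
    linarith
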